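/- Let 𝒫 = ((μ_v, θ_v))_{v=1}^{C} be a symmetric-parametrization list indexed by {1, …, C} with Σ_{v=1}^{C} μ_v = 1 and 0 ≤ θ_1 < θ_2 < ⋯ < θ_C ≤ 1. Then M(𝒫⁺) = Σ_{v=1}^{C} μ_v·θ_v·(μ_v + 2·Σ_{v'=1}^{v−1} μ_{v'}). -/

import Mathlib

/-!
For a fixed pair `(v₀, v₁)` the two signs contribute
`μ₀ μ₁ (1 ∓ θ₀ θ₁)/2 · |θ₁ ∓ θ₀| / (1 ∓ θ₀ θ₁) = μ₀ μ₁ |θ₁ ∓ θ₀| / 2`, and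
`|θ₁ - θ₀| + |θ₁ + θ₀| = 2 max |θ₀| |θ₁|`, so `M(𝒫⁺) = ∑ μ₀ μ₁ max |θ₀| |θ₁|`.
For nonnegative increasing `θ` the maximum is `θ (max v₀ v₁)`; splitting the square sum into
its diagonal and two mirror-image triangles gives the formula.
-/
open Finset
open scoped Classical

noncomputable section

/-- The value `M(P) = ∑ v, μ v * |θ v|` of a symmetric-parametrization list
`P = ((μ v, θ v))_v`. -/
def Mval {V : Type*} [Fintype V] (μ θ : V → ℝ) : ℝ := ∑ v, μ v * |θ v|

/-- Weights of the minus transform `P⁻`. -/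
def minusμ {V : Type*} (μ : V → ℝ) : V × V → ℝ := fun p => μ p.1 * μ p.2

/-- Parameters of the minus transform `P⁻`. -/
def minusθ {V : Type*} (θ : V → ℝ) : V × V → ℝ := fun p => θ p.1 * θ p.2

/-- The sign `∓ᵤ` : `-1` when `u = 1` (`true`), `+1` when `u = 0` (`false`). -/
def sgn : Bool → ℝ := fun u => if u then -1 else 1

/-- Weights of the plus transform `P⁺`
(when `1 ∓ᵤ θ₀ θ₁ = 0` the formula yields `0`, matching the convention that the
entry is then `(0, 0)`). -/
def plusμ {V : Type*} (μ θ : V → ℝ) : Bool × V × V → ℝ :=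
  fun p => μ p.2.1 * μ p.2.2 * (1 + sgn p.1 * (θ p.2.1 * θ p.2.2)) / 2

/-- Parameters of the plus transform `P⁺`
(division by zero is `0` in Lean, matching the convention that the entry is
`(0, 0)` when `1 ∓ᵤ θ₀ θ₁ = 0`). -/
def plusθ {V : Type*} (θ : V → ℝ) : Bool × V × V → ℝ :=
  fun p => (θ p.2.2 + sgn p.1 * θ p.2.1) / (1 + sgn p.1 * (θ p.2.1 * θ p.2.2))

lemma sgn_sq (u : Bool) : sgn u ^ 2 = 1 := by
  cases u <;> norm_num [sgn]

lemma abs_sub_add_abs_add (a b : ℝ) : |b - a| + |b + a| = 2 * max |a| |b| := by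
  rcases abs_cases a with ha | ha <;> rcases abs_cases b with hb | hb <;>
    rcases max_cases |a| |b| with hm | hm <;> rcases abs_cases (b - a) with hs | hs <;>
    rcases abs_cases (b + a) with ht | ht <;> linarith

-- `(1 + s a b)² - (b + s a)² = (1 - a²)(1 - b²)` when `s² = 1`.
lemma abs_add_mul_le_one_add_mul {s a b : ℝ} (hs : s ^ 2 = 1) (ha : |a| ≤ 1) (hb : |b| ≤ 1) :
    |b + s * a| ≤ 1 + s * (a * b) := by
  have ha2 := (sq_le_one_iff_abs_le_one a).mpr ha
  have hb2 := (sq_le_one_iff_abs_le_one b).mpr hb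
  have hsab : |s * (a * b)| ≤ 1 := by
    rw [← sq_le_one_iff_abs_le_one, mul_pow, hs, one_mul, mul_pow]
    exact mul_le_one₀ ha2 (sq_nonneg b) hb2
  refine abs_le_of_sq_le_sq ?_ (by linarith [neg_abs_le (s * (a * b))])
  nlinarith [mul_nonneg (sub_nonneg.mpr ha2) (sub_nonneg.mpr hb2)]

lemma mul_abs_div_of_abs_le {n x : ℝ} (h : |n| ≤ x) : x * |n / x| = |n| := by
  rcases ((abs_nonneg n).trans h).eq_or_lt with rfl | hx
  · simp [abs_nonpos_iff.mp h]
  · rw [abs_div, abs_of_pos hx, mul_div_cancel₀ _ hx.ne']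

section PlusTransform

variable {V : Type*} {μ θ : V → ℝ}

/-- When `1 ∓ θ₀ θ₁ = 0` the numerator `θ₁ ∓ θ₀` vanishes too, so Lean's `x / 0 = 0` agrees with
the `(0, 0)` convention. -/
lemma plusμ_mul_abs_plusθ (hθ : ∀ v, |θ v| ≤ 1) (p : Bool × V × V) :
    plusμ μ θ p * |plusθ θ p| = μ p.2.1 * μ p.2.2 * |θ p.2.2 + sgn p.1 * θ p.2.1| / 2 := by
  have hcancel :=
    mul_abs_div_of_abs_le (abs_add_mul_le_one_add_mul (sgn_sq p.1) (hθ p.2.1) (hθ p.2.2))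
  simp only [plusμ, plusθ]
  linear_combination μ p.2.1 * μ p.2.2 / 2 * hcancel

lemma Mval_plus_eq_sum_sum_max_abs [Fintype V] (hθ : ∀ v, |θ v| ≤ 1) :
    Mval (plusμ μ θ) (plusθ θ) = ∑ v₀, ∑ v₁, μ v₀ * μ v₁ * max |θ v₀| |θ v₁| := by
  simp only [Mval, plusμ_mul_abs_plusθ hθ, Fintype.sum_prod_type, Fintype.sum_bool,
    ← sum_add_distrib]
  refine sum_congr rfl fun v₀ _ => sum_congr rfl fun v₁ _ => ?_
  have hsigns := abs_sub_add_abs_add (θ v₀) (θ v₁)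
  norm_num [sgn, ← sub_eq_add_neg]
  linear_combination μ v₀ * μ v₁ / 2 * hsigns

end PlusTransform

section LinearOrder

variable {ι : Type*} [LinearOrder ι] [Fintype ι] [LocallyFiniteOrderTop ι] [LocallyFiniteOrderBot ι]

lemma sum_sum_eq_sum_add_two_nsmul_sum_Iio {M : Type*} [AddCommMonoid M] (F : ι → ι → M)
    (hF : ∀ i j, F i j = F j i) :
    ∑ i, ∑ j, F i j = ∑ i, (F i i + 2 • ∑ j ∈ Iio i, F i j) := by
  have hrow : ∀ i, ∑ j, F i j = F i i + (∑ j ∈ Ioi i, F i j + ∑ j ∈ Iio i, F i j) := fun i => by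
    rw [Fintype.sum_eq_add_sum_compl i, ← Ioi_disjUnion_Iio, sum_disjUnion]
  have hswap : ∑ i, ∑ j ∈ Ioi i, F i j = ∑ i, ∑ j ∈ Iio i, F i j := by
    rw [sum_comm' (s' := fun j => Iio j) (t' := univ) (by simp)]
    simp_rw [hF]
  simp only [hrow, sum_add_distrib, hswap, two_nsmul]

lemma sum_sum_mul_mul_max (μ w : ι → ℝ) :
    ∑ i, ∑ j, μ i * μ j * w (max i j) = ∑ v, μ v * w v * (μ v + 2 * ∑ v' ∈ Iio v, μ v') := by
  rw [sum_sum_eq_sum_add_two_nsmul_sum_Iio _ fun i j => by rw [max_comm]; ring]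
  refine sum_congr rfl fun v _ => ?_
  have hbelow : ∑ j ∈ Iio v, μ v * μ j * w (max v j) = μ v * w v * ∑ j ∈ Iio v, μ j := by
    rw [mul_sum]
    exact sum_congr rfl fun j hj => by rw [max_eq_left (mem_Iio.mp hj).le]; ring
  rw [max_self, hbelow, nsmul_eq_mul, Nat.cast_ofNat]
  ring

end LinearOrder

theorem stmt11_general (C : ℕ) (μ θ : Fin C → ℝ)
    (hθ0 : ∀ v, 0 ≤ θ v) (hθ1 : ∀ v, θ v ≤ 1) (hmono : StrictMono θ) :
    Mval (plusμ μ θ) (plusθ θ)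
      = ∑ v, μ v * θ v * (μ v + 2 * ∑ v' ∈ Finset.Iio v, μ v') := by
  have hθ : ∀ v, |θ v| ≤ 1 := fun v => abs_le.mpr ⟨by linarith [hθ0 v], hθ1 v⟩
  have hmax : ∀ i j, max |θ i| |θ j| = θ (max i j) := fun i j => by
    rw [abs_of_nonneg (hθ0 i), abs_of_nonneg (hθ0 j), hmono.monotone.map_max]
  rw [Mval_plus_eq_sum_sum_max_abs hθ, ← sum_sum_mul_mul_max]
  simp only [hmax]

theorem stmt11 (C : ℕ) (μ θ : Fin C → ℝ)
    (hμ : ∀ v, 0 ≤ μ v) (hsum : ∑ v, μ v = 1)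
    (hθ0 : ∀ v, 0 ≤ θ v) (hθ1 : ∀ v, θ v ≤ 1) (hmono : StrictMono θ) :
    Mval (plusμ μ θ) (plusθ θ)
      = ∑ v, μ v * θ v * (μ v + 2 * ∑ v' ∈ Finset.Iio v, μ v') :=
  stmt11_general C μ θ hθ0 hθ1 hmono

end
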